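/- arXiv:2006.11178 — 2 statements merged into one kernel-verified Lean document; each statement's English description precedes it below -/
import Mathlib

section
/- Let f : [0,∞) → [0,∞) be a nonincreasing function, σ > 0 and ω > 0 constants such that ∫_t^∞ f(s)^{1+σ} ds ≤ (1/ω) f(0)^σ f(t) for all t ≥ 0. Then f(t) ≤ f(0) ((1+σ)/(1+ωσt))^{1/σ} for all t ≥ 0. -/
/-!
Let `F t = ∫_t^∞ f^(1+σ)`. Since `f` is nonincreasing, `F x - F z ≥ (z - x) f(z)^(1+σ)`, and the
hypothesis says `k F ≤ f` with `k = ω / f(0)^σ`; hence `F` is a sub-solution of the Bernoulli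
equation `y' = -k^(1+σ) y^(1+σ)` with `F(0) ≤ A = f(0)^(1+σ) / ω`. A comparison argument (against
exact solutions with slightly smaller rate, to get the strict inequality the comparison principle
needs) gives `F(s) ≤ A (1 + σ ω s)^(-1/σ)`. Finally `f(t)^(1+σ) (t - s) ≤ F(s)` for `s ≤ t`, and the
optimal choice of `s` yields the bound.
-/

open MeasureTheory Set Filter Topology

theorem AntitoneOn.rpow_const_of_nonneg {f : ℝ → ℝ} {s : Set ℝ} (hf : AntitoneOn f s)
    (hf_nonneg : ∀ x ∈ s, 0 ≤ f x) {p : ℝ} (hp : 0 ≤ p) : AntitoneOn (fun x => f x ^ p) s :=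
  fun _ ha _ hb hab => Real.rpow_le_rpow (hf_nonneg _ hb) (hf ha hb hab) hp

section TailIntegral

variable {g : ℝ → ℝ} {x z : ℝ}

theorem mul_sub_le_integral_Ici_sub (hg : IntegrableOn g (Ici x))
    (hg_anti : AntitoneOn g (Icc x z)) (hxz : x ≤ z) :
    g z * (z - x) ≤ (∫ s in Ici x, g s) - ∫ s in Ici z, g s := by
  rw [integral_Ici_eq_integral_Ioi, integral_Ici_eq_integral_Ioi,
    intervalIntegral.integral_Ioi_sub_Ioi (hg.mono_set Ioi_subset_Ici_self) hxz]
  have hg_int : IntervalIntegrable g volume x z :=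
    (intervalIntegrable_iff_integrableOn_Icc_of_le hxz).2 (hg.mono_set Icc_subset_Ici_self)
  calc g z * (z - x) = ∫ _ in x..z, g z := by simp [mul_comm]
    _ ≤ ∫ s in x..z, g s := intervalIntegral.integral_mono_on hxz intervalIntegrable_const hg_int
        fun s hs => hg_anti hs (right_mem_Icc.2 hxz) hs.2

theorem slope_integral_Ici_le (hg : IntegrableOn g (Ici x)) (hg_anti : AntitoneOn g (Icc x z))
    (hxz : x < z) : slope (fun t => ∫ s in Ici t, g s) x z ≤ -g z := by
  have h := mul_sub_le_integral_Ici_sub hg hg_anti hxz.le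
  rw [slope_def_field, div_le_iff₀ (sub_pos.2 hxz)]
  linarith

end TailIntegral

/-- The solution of `y' = -c y^(1+σ)`, `y 0 = A`. -/
noncomputable def bernoulliDecay (σ c A t : ℝ) : ℝ :=
  A * (1 + σ * c * A ^ σ * t) ^ (-(1 / σ))

section Bernoulli

variable {σ c A : ℝ}

theorem bernoulliDecay_pos (hσ : 0 < σ) (hc : 0 ≤ c) (hA : 0 < A) {t : ℝ} (ht : 0 ≤ t) :
    0 < bernoulliDecay σ c A t := by
  unfold bernoulliDecay; positivity

theorem hasDerivAt_bernoulliDecay (hσ : 0 < σ) (hc : 0 ≤ c) (hA : 0 ≤ A) {t : ℝ} (ht : 0 ≤ t) :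
    HasDerivAt (bernoulliDecay σ c A) (-c * bernoulliDecay σ c A t ^ (1 + σ)) t := by
  have hu : 0 < 1 + σ * c * A ^ σ * t := by positivity
  have h := (((hasDerivAt_id t).const_mul (σ * c * A ^ σ)).const_add 1).rpow_const
    (p := -(1 / σ)) (Or.inl hu.ne') |>.const_mul A
  refine h.congr_deriv ?_
  rw [bernoulliDecay, id, Real.mul_rpow hA (Real.rpow_nonneg hu.le _), ← Real.rpow_mul hu.le,
    Real.rpow_one_add' hA (by linarith)]
  rw [show -(1 / σ) * (1 + σ) = -(1 / σ) - 1 by field_simp; ring]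
  field_simp

variable {F : ℝ → ℝ}

theorem le_bernoulliDecay_of_lt (hσ : 0 < σ) (hA : 0 < A) (hF : ContinuousOn F (Ici 0))
    (hF0 : F 0 ≤ A) (hslope : ∀ x z, 0 ≤ x → x < z → slope F x z ≤ -c * F z ^ (1 + σ))
    {c' : ℝ} (hc' : 0 ≤ c') (hc'c : c' < c) {t : ℝ} (ht : 0 ≤ t) :
    F t ≤ bernoulliDecay σ c' A t := by
  have hB : ∀ x, 0 ≤ x → HasDerivAt (bernoulliDecay σ c' A)
      (-c' * bernoulliDecay σ c' A x ^ (1 + σ)) x :=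
    fun x hx => hasDerivAt_bernoulliDecay hσ hc' hA.le hx
  refine image_le_of_liminf_slope_right_lt_deriv_boundary' (hF.mono Icc_subset_Ici_self)
    (f' := fun x => -c * F x ^ (1 + σ)) ?_ (by simpa [bernoulliDecay] using hF0)
    (fun x hx => (hB x hx.1).continuousAt.continuousWithinAt)
    (fun x hx => (hB x hx.1).hasDerivWithinAt) ?_ (right_mem_Icc.2 ht)
  · intro x hx r hr
    have hcont : ContinuousWithinAt (fun z => -c * F z ^ (1 + σ)) (Ioi x) x :=
      (((hF x hx.1).mono (Ioi_subset_Ici hx.1)).rpow_const (Or.inr (by linarith))).const_mul _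
    have hlt : ∀ᶠ z in 𝓝[>] x, -c * F z ^ (1 + σ) < r := hcont.eventually_lt_const hr
    refine (hlt.and self_mem_nhdsWithin).frequently.mono fun z ⟨hz, hxz⟩ => ?_
    exact (hslope x z hx.1 hxz).trans_lt hz
  · intro x hx hFB
    have hpow : 0 < bernoulliDecay σ c' A x ^ (1 + σ) :=
      Real.rpow_pos_of_pos (bernoulliDecay_pos hσ hc' hA hx.1) _
    simp only [hFB]
    nlinarith

theorem le_bernoulliDecay (hσ : 0 < σ) (hc : 0 < c) (hA : 0 < A) (hF : ContinuousOn F (Ici 0))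
    (hF0 : F 0 ≤ A) (hslope : ∀ x z, 0 ≤ x → x < z → slope F x z ≤ -c * F z ^ (1 + σ))
    {t : ℝ} (ht : 0 ≤ t) : F t ≤ bernoulliDecay σ c A t := by
  have hcont : ContinuousAt (fun c' => bernoulliDecay σ c' A t) c := by
    have hu : 0 < 1 + σ * c * A ^ σ * t := by positivity
    unfold bernoulliDecay
    exact continuousAt_const.mul
      ((by fun_prop : ContinuousAt (fun c' => 1 + σ * c' * A ^ σ * t) c).rpow_const
        (Or.inl hu.ne'))
  refine ge_of_tendsto (hcont.tendsto.mono_left (nhdsWithin_le_nhds (s := Iio c))) ?_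
  filter_upwards [Ioo_mem_nhdsLT hc] with c' hc'
  exact le_bernoulliDecay_of_lt hσ hA hF hF0 hslope hc'.1.le hc'.2 ht

end Bernoulli

section Decay

variable {f : ℝ → ℝ} {σ ω : ℝ}

theorem integral_Ici_rpow_le (hσ : 0 < σ) (hω : 0 < ω) (hf0 : 0 < f 0)
    (hf_nonneg : ∀ t, 0 ≤ t → 0 ≤ f t) (hf_mono : AntitoneOn f (Ici 0))
    (hf_int : ∀ t, 0 ≤ t → IntegrableOn (fun s => f s ^ (1 + σ)) (Ici t))
    (hineq : ∀ t, 0 ≤ t → ∫ s in Ici t, f s ^ (1 + σ) ≤ (1 / ω) * f 0 ^ σ * f t)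
    {s : ℝ} (hs : 0 ≤ s) :
    ∫ x in Ici s, f x ^ (1 + σ) ≤ f 0 ^ (1 + σ) / ω * (1 + σ * ω * s) ^ (-(1 / σ)) := by
  set F := fun t => ∫ s in Ici t, f s ^ (1 + σ)
  set k := ω / f 0 ^ σ
  set A := f 0 ^ (1 + σ) / ω
  have hk : 0 < k := by positivity
  have hkA : k * A = f 0 := by
    simp only [k, A]; rw [Real.rpow_one_add' hf0.le (by linarith)]; field_simp
  have hkF : ∀ z, 0 ≤ z → k * F z ≤ f z := fun z hz =>
    calc k * F z ≤ k * ((1 / ω) * f 0 ^ σ * f z) := by gcongr; exact hineq z hz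
      _ = f z := by simp only [k]; field_simp
  have hg_anti := hf_mono.rpow_const_of_nonneg hf_nonneg (p := 1 + σ) (by linarith)
  have hslope : ∀ x z, 0 ≤ x → x < z → slope F x z ≤ -k ^ (1 + σ) * F z ^ (1 + σ) := by
    intro x z hx hxz
    have hFz : 0 ≤ F z := setIntegral_nonneg measurableSet_Ici fun y hy =>
      Real.rpow_nonneg (hf_nonneg y (hx.trans (hxz.le.trans hy))) _
    refine (slope_integral_Ici_le (hf_int x hx)
      (hg_anti.mono (Icc_subset_Ici_self.trans (Ici_subset_Ici.2 hx))) hxz).trans ?_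
    rw [neg_mul, neg_le_neg_iff, ← Real.mul_rpow hk.le hFz]
    exact Real.rpow_le_rpow (by positivity) (hkF z (hx.trans hxz.le)) (by linarith)
  have hF0 : F 0 ≤ A := le_of_mul_le_mul_left (hkA ▸ hkF 0 le_rfl) hk
  have hdecay := le_bernoulliDecay hσ (by positivity) (by positivity)
    ((hf_int 0 le_rfl).continuousOn_Ici_primitive_Ici) hF0 hslope hs
  have hkA_pow : k ^ (1 + σ) * A ^ σ = ω := by
    rw [Real.rpow_one_add' hk.le (by linarith), mul_assoc, ← Real.mul_rpow hk.le (by positivity),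
      hkA]
    simp only [k]; field_simp
  simpa only [bernoulliDecay, mul_assoc σ, hkA_pow] using hdecay

theorem le_mul_rpow_of_integral_Ici_rpow_le (hσ : 0 < σ) (hω : 0 < ω)
    (hf_nonneg : ∀ t, 0 ≤ t → 0 ≤ f t) (hf_mono : AntitoneOn f (Ici 0))
    (hf_int : ∀ t, 0 ≤ t → IntegrableOn (fun s => f s ^ (1 + σ)) (Ici t))
    (htail : ∀ s, 0 ≤ s →
      ∫ x in Ici s, f x ^ (1 + σ) ≤ f 0 ^ (1 + σ) / ω * (1 + σ * ω * s) ^ (-(1 / σ)))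
    {t : ℝ} (ht : 0 ≤ t) : f t ≤ f 0 * ((1 + σ) / (1 + ω * σ * t)) ^ (1 / σ) := by
  set R := (1 + σ) / (1 + ω * σ * t) with hR_def
  have hR : 0 < R := by positivity
  have hf0 : 0 ≤ f 0 := hf_nonneg 0 le_rfl
  have hft : f t ≤ f 0 := hf_mono self_mem_Ici ht ht
  by_cases hωt : ω * t ≤ 1
  · have hR1 : 1 ≤ R := by
      rw [hR_def, le_div_iff₀ (by positivity)]
      nlinarith
    exact hft.trans (le_mul_of_one_le_right hf0 (Real.one_le_rpow hR1 (by positivity)))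
  -- `s` minimises `(t - s)⁻¹ * (1 + σ * ω * s) ^ (-(1 / σ))` over `s < t`.
  set s := (ω * t - 1) / (ω * (1 + σ)) with hs_def
  have hs : 0 ≤ s := div_nonneg (by linarith) (by positivity)
  have hst : s < t := by
    rw [hs_def, div_lt_iff₀ (by positivity)]
    nlinarith
  have hRs : 1 + σ * ω * s = R⁻¹ := by
    rw [hs_def, hR_def, inv_div]; field_simp; ring
  have hts : t - s = (ω * R)⁻¹ := by
    rw [hs_def, hR_def]; field_simp; ring
  have hg_anti : AntitoneOn (fun x => f x ^ (1 + σ)) (Icc s t) :=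
    (hf_mono.rpow_const_of_nonneg hf_nonneg (by linarith)).mono
      (Icc_subset_Ici_self.trans (Ici_subset_Ici.2 hs))
  have htail_nonneg : 0 ≤ ∫ x in Ici t, f x ^ (1 + σ) :=
    setIntegral_nonneg measurableSet_Ici fun x hx => Real.rpow_nonneg (hf_nonneg x (ht.trans hx)) _
  have hpow : f t ^ (1 + σ) ≤ (f 0 * R ^ (1 / σ)) ^ (1 + σ) := by
    have h := (mul_sub_le_integral_Ici_sub (hf_int s hs) hg_anti hst.le).trans
      ((sub_le_self _ htail_nonneg).trans (htail s hs))
    rw [hts, hRs] at h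
    rw [← mul_le_mul_iff_left₀ (by positivity : 0 < (ω * R)⁻¹)]
    calc f t ^ (1 + σ) * (ω * R)⁻¹ ≤ f 0 ^ (1 + σ) / ω * R⁻¹ ^ (-(1 / σ)) := h
      _ = (f 0 * R ^ (1 / σ)) ^ (1 + σ) * (ω * R)⁻¹ := by
        rw [Real.mul_rpow hf0 (Real.rpow_nonneg hR.le _), ← Real.rpow_mul hR.le,
          Real.inv_rpow hR.le, Real.rpow_neg hR.le, inv_inv, mul_add, mul_one,
          one_div_mul_cancel hσ.ne', Real.rpow_add hR, Real.rpow_one]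
        field_simp
  exact (Real.rpow_le_rpow_iff (hf_nonneg t ht) (by positivity) (by linarith)).1 hpow

end Decay

theorem martinez_decay_poly_general (f : ℝ → ℝ) (σ ω : ℝ) (hσ : 0 < σ) (hω : 0 < ω)
    (hf_nonneg : ∀ t, 0 ≤ t → 0 ≤ f t)
    (hf_mono : AntitoneOn f (Ici 0))
    (hf_int : ∀ t, 0 ≤ t → IntegrableOn (fun s => f s ^ (1 + σ)) (Ici t))
    (hineq : ∀ t, 0 ≤ t → ∫ s in Ici t, f s ^ (1 + σ) ≤ (1 / ω) * f 0 ^ σ * f t) :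
    ∀ t, 0 ≤ t → f t ≤ f 0 * ((1 + σ) / (1 + ω * σ * t)) ^ (1 / σ) := by
  intro t ht
  rcases (hf_nonneg 0 le_rfl).eq_or_lt with hf0 | hf0
  · simpa [← hf0] using hf_mono self_mem_Ici ht ht
  exact le_mul_rpow_of_integral_Ici_rpow_le hσ hω hf_nonneg hf_mono hf_int
    (fun _ hs => integral_Ici_rpow_le hσ hω hf0 hf_nonneg hf_mono hf_int hineq hs) ht

theorem martinez_decay_poly (f : ℝ → ℝ) (σ ω : ℝ) (hσ : 0 < σ) (hω : 0 < ω)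
    (hf_nonneg : ∀ t, 0 ≤ t → 0 ≤ f t)
    (hf_mono : AntitoneOn f (Ici 0))
    (hf_meas : Measurable f)
    (hf_int : ∀ t, 0 ≤ t → IntegrableOn (fun s => f s ^ (1 + σ)) (Ici t))
    (hineq : ∀ t, 0 ≤ t → ∫ s in Ici t, f s ^ (1 + σ) ≤ (1 / ω) * f 0 ^ σ * f t) :
    ∀ t, 0 ≤ t → f t ≤ f 0 * ((1 + σ) / (1 + ω * σ * t)) ^ (1 / σ) :=
  martinez_decay_poly_general f σ ω hσ hω hf_nonneg hf_mono hf_int hineq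
end

section
/- Let f : [0,∞) → [0,∞) be a nonincreasing function and ω > 0 a constant such that ∫_t^∞ f(s) ds ≤ (1/ω) f(t) for all t ≥ 0. Then f(t) ≤ f(0) e^{1-ωt} for all t ≥ 0. -/
open MeasureTheory Set

/-
Writing `E t = ∫ s in Ici t, f s`, monotonicity gives `E t ≥ h f(t+h) + E(t+h)`, and the hypothesis
`ω E ≤ f` turns this into `(1 + ω h) E(t+h) ≤ E t`. Iterating with step `t/n` and letting `n → ∞`
yields `e^{ω t} E t ≤ E 0 ≤ f 0 / ω`. Finally `f t / ω ≤ ∫ over [t - 1/ω, t] ≤ E(t - 1/ω)`,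
so `f t ≤ f 0 e^{1 - ω t}`; for `t < 1/ω` the bound is just `f t ≤ f 0`.
-/

section DiscreteGronwall

variable {g : ℝ → ℝ} {c : ℝ}

theorem one_add_mul_pow_mul_le (hc : 0 ≤ c)
    (hstep : ∀ t h, 0 ≤ t → 0 ≤ h → (1 + c * h) * g (t + h) ≤ g t) {h : ℝ} (hh : 0 ≤ h) :
    ∀ n : ℕ, (1 + c * h) ^ n * g (n * h) ≤ g 0
  | 0 => by simp
  | n + 1 => calc
      (1 + c * h) ^ (n + 1) * g ((n + 1 : ℕ) * h)
          = (1 + c * h) ^ n * ((1 + c * h) * g (n * h + h)) := by push_cast; ring_nf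
      _ ≤ (1 + c * h) ^ n * g (n * h) := by
          gcongr
          exact hstep _ _ (by positivity) hh
      _ ≤ g 0 := one_add_mul_pow_mul_le hc hstep hh n

theorem exp_mul_mul_le_of_one_add_mul_mul_le (hc : 0 ≤ c)
    (hstep : ∀ t h, 0 ≤ t → 0 ≤ h → (1 + c * h) * g (t + h) ≤ g t) {t : ℝ} (ht : 0 ≤ t) :
    Real.exp (c * t) * g t ≤ g 0 := by
  have hlim := (Real.tendsto_one_add_div_pow_exp (c * t)).mul_const (g t)
  refine le_of_tendsto hlim ?_
  filter_upwards [Filter.eventually_ge_atTop 1] with n hn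
  have hn : (n : ℝ) ≠ 0 := by positivity
  simpa [mul_div_assoc, mul_div_cancel₀ t hn] using
    one_add_mul_pow_mul_le hc hstep (div_nonneg ht n.cast_nonneg) n

end DiscreteGronwall

section TailIntegral

variable {f : ℝ → ℝ} {a b : ℝ}

theorem setIntegral_Ici_eq_setIntegral_Ico_add (hab : a ≤ b) (hf : IntegrableOn f (Ici a)) :
    ∫ s in Ici a, f s = (∫ s in Ico a b, f s) + ∫ s in Ici b, f s := by
  rw [← Ico_union_Ici_eq_Ici hab, setIntegral_union _ measurableSet_Ici
    (hf.mono_set Ico_subset_Ici_self) (hf.mono_set (Ici_subset_Ici.mpr hab))]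
  exact disjoint_left.mpr fun _ hx hy => (not_le.mpr hx.2) hy

theorem AntitoneOn.sub_mul_le_setIntegral_Ico (hf : AntitoneOn f (Icc a b)) (hab : a ≤ b)
    (hint : IntegrableOn f (Ico a b)) : (b - a) * f b ≤ ∫ s in Ico a b, f s := by
  have := setIntegral_ge_of_const_le_real measurableSet_Ico (by simp) (c := f b)
    (fun s hs => hf (Ico_subset_Icc_self hs) (right_mem_Icc.mpr hab) hs.2.le) hint
  rwa [Real.volume_real_Ico_of_le hab, mul_comm] at this

theorem one_add_mul_mul_setIntegral_Ici_le {ω h : ℝ} (hf : AntitoneOn f (Icc a (a + h)))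
    (hint : IntegrableOn f (Ici a)) (hh : 0 ≤ h) (hω : ω * ∫ s in Ici (a + h), f s ≤ f (a + h)) :
    (1 + ω * h) * ∫ s in Ici (a + h), f s ≤ ∫ s in Ici a, f s := by
  have hIco := hf.sub_mul_le_setIntegral_Ico (by linarith) (hint.mono_set Ico_subset_Ici_self)
  rw [setIntegral_Ici_eq_setIntegral_Ico_add (b := a + h) (by linarith) hint]
  rw [add_sub_cancel_left] at hIco
  linarith [mul_le_mul_of_nonneg_left hω hh]

theorem mul_le_setIntegral_Ici_sub {ℓ : ℝ} (hf : AntitoneOn f (Icc (b - ℓ) b))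
    (hint : IntegrableOn f (Ici (b - ℓ))) (hf_nonneg : ∀ s ∈ Ici b, 0 ≤ f s) (hℓ : 0 ≤ ℓ) :
    ℓ * f b ≤ ∫ s in Ici (b - ℓ), f s := by
  have hIco := hf.sub_mul_le_setIntegral_Ico (by linarith) (hint.mono_set Ico_subset_Ici_self)
  rw [setIntegral_Ici_eq_setIntegral_Ico_add (b := b) (by linarith) hint]
  rw [sub_sub_cancel] at hIco
  linarith [setIntegral_nonneg (μ := volume) measurableSet_Ici hf_nonneg]

end TailIntegral

theorem martinez_decay_exp_general (f : ℝ → ℝ) (ω : ℝ) (hω : 0 < ω)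
    (hf_nonneg : ∀ t, 0 ≤ t → 0 ≤ f t)
    (hf_mono : AntitoneOn f (Ici 0))
    (hf_int : ∀ t, 0 ≤ t → IntegrableOn f (Ici t))
    (hineq : ∀ t, 0 ≤ t → ∫ s in Ici t, f s ≤ (1 / ω) * f t) :
    ∀ t, 0 ≤ t → f t ≤ f 0 * Real.exp (1 - ω * t) := by
  intro t ht
  have hineq' (s : ℝ) (hs : 0 ≤ s) : ω * ∫ x in Ici s, f x ≤ f s := by
    have := hineq s hs
    rwa [one_div_mul_eq_div, le_div_iff₀' hω] at this
  have hdecay (s : ℝ) (hs : 0 ≤ s) :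
      Real.exp (ω * s) * ∫ x in Ici s, f x ≤ ∫ x in Ici 0, f x :=
    exp_mul_mul_le_of_one_add_mul_mul_le (g := fun s => ∫ x in Ici s, f x) hω.le (fun s h hs hh =>
      one_add_mul_mul_setIntegral_Ici_le (hf_mono.mono fun x hx => hs.trans hx.1) (hf_int s hs) hh
        (hineq' _ (by positivity))) hs
  rcases le_or_gt (ω * t) 1 with hsmall | hlarge
  · calc f t ≤ f 0 := hf_mono self_mem_Ici ht ht
      _ ≤ f 0 * Real.exp (1 - ω * t) :=
          le_mul_of_one_le_right (hf_nonneg 0 le_rfl) (Real.one_le_exp (by linarith))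
  · set u := t - 1 / ω with hu
    have hu0 : 0 ≤ u := by
      rw [hu, sub_nonneg, div_le_iff₀ hω]; linarith
    have htail := mul_le_setIntegral_Ici_sub (hf_mono.mono fun x hx => hu0.trans hx.1)
      (hf_int u hu0) (fun s hs => hf_nonneg s (ht.trans hs)) (one_div_nonneg.mpr hω.le)
    have hexp : Real.exp (1 - ω * t) = (Real.exp (ω * u))⁻¹ := by
      rw [← Real.exp_neg, hu]; congr 1; field_simp; ring
    rw [hexp, ← div_eq_mul_inv, le_div_iff₀ (Real.exp_pos _)]
    calc f t * Real.exp (ω * u) = ω * (1 / ω * f t) * Real.exp (ω * u) := by field_simp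
      _ ≤ ω * (Real.exp (ω * u) * ∫ x in Ici u, f x) := by
          rw [mul_assoc, mul_comm (Real.exp _)]; gcongr
      _ ≤ ω * ∫ x in Ici 0, f x := by gcongr; exact hdecay u hu0
      _ ≤ f 0 := hineq' 0 le_rfl

theorem martinez_decay_exp (f : ℝ → ℝ) (ω : ℝ) (hω : 0 < ω)
    (hf_nonneg : ∀ t, 0 ≤ t → 0 ≤ f t)
    (hf_mono : AntitoneOn f (Ici 0))
    (hf_meas : Measurable f)
    (hf_int : ∀ t, 0 ≤ t → IntegrableOn f (Ici t))
    (hineq : ∀ t, 0 ≤ t → ∫ s in Ici t, f s ≤ (1 / ω) * f t) :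
    ∀ t, 0 ≤ t → f t ≤ f 0 * Real.exp (1 - ω * t) :=
  martinez_decay_exp_general f ω hω hf_nonneg hf_mono hf_int hineq
end
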